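/- arXiv:2310.15286 — 2 statements merged into one kernel-verified Lean document; each statement's English description precedes it below -/
import Mathlib

section
/- Let t, d ∈ ℕ with d ≥ 1, let x_1,…,x_t ∈ [−1,1]^d, let w̄ ∈ ℝ^d, e_1,…,e_t ∈ ℝ, and set y_τ = x_τᵀw̄ + e_τ. For λ > 0 let ŵ_t be any minimizer over w ∈ ℝ^d of Σ_{τ=1}^t (y_τ − x_τᵀw)² + λ‖w‖₁, and let S̄ := {i : w̄_i ≠ 0}. If ‖Σ_{τ=1}^t e_τ x_τ‖_∞ ≤ λ/4, then 2 Σ_{τ=1}^t (x_τᵀ(w̄ − ŵ_t))² + λ Σ_{i ∉ S̄} |ŵ_t(i)| ≤ 3λ Σ_{i ∈ S̄} |ŵ_t(i) − w̄(i)|; in particular the error satisfies the cone condition Σ_{i ∉ S̄} |ŵ_t(i) − w̄(i)| ≤ 3 Σ_{i ∈ S̄} |ŵ_t(i) − w̄(i)|. -/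
/-- **Basic inequality and cone condition for the Lasso estimator.**
With covariates `x_τ ∈ [−1,1]^d`, responses `y_τ = x_τᵀw̄ + e_τ`, and `ŵ` a minimizer of
the Lasso objective `Σ_τ (y_τ − x_τᵀw)² + λ‖w‖₁`, if the noise-design correlation
satisfies `‖Σ_τ e_τ x_τ‖_∞ ≤ λ/4`, then
`2 Σ_τ (x_τᵀ(w̄ − ŵ))² + λ Σ_{i∉S̄} |ŵ_i| ≤ 3λ Σ_{i∈S̄} |ŵ_i − w̄_i|`, and in particular
the error lies in the cone `Σ_{i∉S̄} |ŵ_i − w̄_i| ≤ 3 Σ_{i∈S̄} |ŵ_i − w̄_i|`,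
where `S̄ = {i : w̄_i ≠ 0}`. -/
theorem lasso_basic_inequality {t d : ℕ} (hd : 1 ≤ d)
    (x : Fin t → Fin d → ℝ) (hx : ∀ τ i, |x τ i| ≤ 1)
    (wbar : Fin d → ℝ) (e : Fin t → ℝ) (y : Fin t → ℝ)
    (hy : ∀ τ, y τ = (∑ i, x τ i * wbar i) + e τ)
    (lam : ℝ) (hlam : 0 < lam)
    (what : Fin d → ℝ)
    (hmin : ∀ w : Fin d → ℝ,
      (∑ τ, (y τ - ∑ i, x τ i * what i) ^ 2) + lam * ∑ i, |what i| ≤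
        (∑ τ, (y τ - ∑ i, x τ i * w i) ^ 2) + lam * ∑ i, |w i|)
    (Sbar : Finset (Fin d)) (hSbar : ∀ i, i ∈ Sbar ↔ wbar i ≠ 0)
    (hnoise : ∀ i, |∑ τ, e τ * x τ i| ≤ lam / 4) :
    2 * (∑ τ, (∑ i, x τ i * (wbar i - what i)) ^ 2) + lam * ∑ i ∈ Sbarᶜ, |what i| ≤
      3 * lam * ∑ i ∈ Sbar, |what i - wbar i| ∧
    (∑ i ∈ Sbarᶜ, |what i - wbar i|) ≤ 3 * ∑ i ∈ Sbar, |what i - wbar i| := by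
  classical
  -- notation
  set Z : ℝ := ∑ τ, (∑ i, x τ i * (wbar i - what i)) ^ 2 with hZ
  set E : ℝ := ∑ τ, e τ * (∑ i, x τ i * (wbar i - what i)) with hE
  set P : ℝ := ∑ i ∈ Sbar, |wbar i - what i| with hP
  set Q : ℝ := ∑ i ∈ Sbarᶜ, |what i| with hQ
  set W : ℝ := ∑ i ∈ Sbar, |wbar i| with hW
  set V : ℝ := ∑ i ∈ Sbar, |what i| with hV
  have hwbar0 : ∀ i ∈ Sbarᶜ, wbar i = 0 := by
    intro i hi
    by_contra h
    exact (Finset.mem_compl.mp hi) ((hSbar i).mpr h)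
  -- basic inequality from minimality
  have key := hmin wbar
  have hy1 : ∀ τ, y τ - ∑ i, x τ i * wbar i = e τ := by
    intro τ; rw [hy]; ring
  have hy2 : ∀ τ, y τ - ∑ i, x τ i * what i
      = e τ + ∑ i, x τ i * (wbar i - what i) := by
    intro τ
    rw [hy]
    simp only [mul_sub, Finset.sum_sub_distrib]
    ring
  have e1 : ∑ τ, (y τ - ∑ i, x τ i * what i) ^ 2
      = ∑ τ, (e τ + ∑ i, x τ i * (wbar i - what i)) ^ 2 :=
    Finset.sum_congr rfl fun τ _ => by rw [hy2 τ]
  have e2 : ∑ τ, (y τ - ∑ i, x τ i * wbar i) ^ 2 = ∑ τ, (e τ) ^ 2 :=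
    Finset.sum_congr rfl fun τ _ => by rw [hy1 τ]
  rw [e1, e2] at key
  have expand : ∑ τ, (e τ + ∑ i, x τ i * (wbar i - what i)) ^ 2
      = (∑ τ, (e τ)^2) + 2 * E + Z := by
    rw [hE, hZ, Finset.mul_sum, ← Finset.sum_add_distrib, ← Finset.sum_add_distrib]
    exact Finset.sum_congr rfl fun τ _ => by ring
  rw [expand] at key
  -- split l1 norms over Sbar and its complement
  have hsplit : ∀ f : Fin d → ℝ, ∑ i, f i = ∑ i ∈ Sbar, f i + ∑ i ∈ Sbarᶜ, f i :=
    fun f => (Finset.sum_add_sum_compl Sbar f).symm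
  have hA : ∑ i ∈ Sbarᶜ, |wbar i| = 0 :=
    Finset.sum_eq_zero fun i hi => by rw [hwbar0 i hi, abs_zero]
  rw [hsplit fun i => |what i|, hsplit fun i => |wbar i|, hA, add_zero,
      mul_add, ← hV, ← hQ, ← hW] at key
  -- key : ∑ e² + 2E + Z + (lam*V + lam*Q) ≤ ∑ e² + lam*W
  -- bound on the cross term
  have hB : ∑ i ∈ Sbarᶜ, |wbar i - what i| = Q := by
    rw [hQ]
    exact Finset.sum_congr rfl fun i hi => by rw [hwbar0 i hi, zero_sub, abs_neg]
  have hez : E = ∑ i, (∑ τ, e τ * x τ i) * (wbar i - what i) := by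
    rw [hE]
    simp_rw [Finset.mul_sum]
    rw [Finset.sum_comm]
    exact Finset.sum_congr rfl fun i _ =>
      (Finset.sum_congr rfl fun τ _ => by ring).trans (Finset.sum_mul _ _ _).symm
  have habs : |E| ≤ lam / 4 * P + lam / 4 * Q := by
    rw [hez]
    refine (Finset.abs_sum_le_sum_abs _ _).trans ?_
    have h1 : ∑ i, |(∑ τ, e τ * x τ i) * (wbar i - what i)|
        ≤ ∑ i, lam / 4 * |wbar i - what i| := by
      refine Finset.sum_le_sum fun i _ => ?_
      rw [abs_mul]
      exact mul_le_mul_of_nonneg_right (hnoise i) (abs_nonneg _)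
    refine h1.trans ?_
    rw [hsplit fun i => lam / 4 * |wbar i - what i|, ← Finset.mul_sum, ← Finset.mul_sum,
        hB, ← hP]
  have hEge : -(lam / 4 * P + lam / 4 * Q) ≤ E := by
    have := neg_abs_le E; linarith
  -- triangle inequality on Sbar
  have hdiff : lam * W - lam * V ≤ lam * P := by
    have h1 : W - V ≤ P := by
      rw [hW, hV, hP, ← Finset.sum_sub_distrib]
      exact Finset.sum_le_sum fun i _ => abs_sub_abs_le_abs_sub _ _
    have := mul_le_mul_of_nonneg_left h1 hlam.le
    rw [mul_sub] at this
    linarith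
  have hZ0 : 0 ≤ Z := Finset.sum_nonneg fun τ _ => sq_nonneg _
  have goal1 : 2 * Z + lam * Q ≤ 3 * lam * P := by linarith [key, hEge, hdiff]
  constructor
  · have hPeq : ∑ i ∈ Sbar, |what i - wbar i| = P :=
      Finset.sum_congr rfl fun i _ => abs_sub_comm _ _
    rw [hPeq]
    exact goal1
  · have hQeq : ∑ i ∈ Sbarᶜ, |what i - wbar i| = Q :=
      Finset.sum_congr rfl fun i hi => by rw [hwbar0 i hi, sub_zero]
    have hPeq : ∑ i ∈ Sbar, |what i - wbar i| = P :=
      Finset.sum_congr rfl fun i _ => abs_sub_comm _ _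
    rw [hQeq, hPeq]
    have h2 : lam * Q ≤ lam * (3 * P) := by linarith [key, hEge, hdiff, hZ0]
    exact le_of_mul_le_mul_left h2 hlam
end

section
/- Let Σ₀ and Σ₁ be positive semidefinite matrices in ℝ^{d×d} and let s ∈ {1,…,d}. Suppose σ²_min(Σ₀, s) > 0 and ‖Σ₁ − Σ₀‖_∞ ≤ σ²_min(Σ₀, s)/(32s), where ‖M‖_∞ denotes the entrywise maximum absolute value. Then σ²_min(Σ₁, s) ≥ σ²_min(Σ₀, s)/2. -/
/-- The restricted minimum eigenvalue `σ²_min(M, s)` of a positive semidefinite matrix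
`M ∈ ℝ^{d×d}` at sparsity level `s`: the infimum, over index sets `I` with `|I| ≤ s`
and vectors `β` with `β_I ≠ 0` and `‖β_{I^c}‖₁ ≤ 3‖β_I‖₁`, of `(βᵀMβ)/‖β_I‖₂²`. -/
noncomputable def restrictedMinEigenvalueSq {d : ℕ} (M : Matrix (Fin d) (Fin d) ℝ) (s : ℕ) : ℝ :=
  sInf {v : ℝ | ∃ (I : Finset (Fin d)) (β : Fin d → ℝ),
    I.card ≤ s ∧ (∃ i ∈ I, β i ≠ 0) ∧
    (∑ i ∈ Iᶜ, |β i|) ≤ 3 * ∑ i ∈ I, |β i| ∧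
    v = (∑ i, ∑ j, β i * M i j * β j) / (∑ i ∈ I, β i ^ 2)}

/-!
The quadratic form changes by at most `‖Σ₁ - Σ₀‖_∞ ‖β‖₁²`, and on the cone
`‖β_{Iᶜ}‖₁ ≤ 3‖β_I‖₁` with `|I| ≤ s` Cauchy–Schwarz gives `‖β‖₁² ≤ 16 s ‖β_I‖₂²`.
So the perturbation costs at most `σ²_min(Σ₀, s)/(32 s) · 16 s ‖β_I‖₂² = σ²_min(Σ₀, s)/2 · ‖β_I‖₂²`
in every Rayleigh quotient.
-/

open Finset

section QuadraticForm

variable {ι : Type*} [Fintype ι]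

theorem Matrix.PosSemidef.sum_mul_mul_nonneg {M : Matrix ι ι ℝ} (hM : M.PosSemidef)
    (β : ι → ℝ) : 0 ≤ ∑ i, ∑ j, β i * M i j * β j := by
  have h := hM.dotProduct_mulVec_nonneg β
  simpa [dotProduct, Matrix.mulVec, Finset.mul_sum, mul_assoc] using h

theorem abs_sum_mul_mul_sub_le {A B : Matrix ι ι ℝ} {ε : ℝ} (h : ∀ i j, |A i j - B i j| ≤ ε)
    (β : ι → ℝ) :
    |∑ i, ∑ j, β i * A i j * β j - ∑ i, ∑ j, β i * B i j * β j| ≤ ε * (∑ i, |β i|) ^ 2 := by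
  calc |∑ i, ∑ j, β i * A i j * β j - ∑ i, ∑ j, β i * B i j * β j|
      = |∑ i, ∑ j, β i * (A i j - B i j) * β j| := by
        simp only [mul_sub, sub_mul, Finset.sum_sub_distrib]
    _ ≤ ∑ i, ∑ j, |β i * (A i j - B i j) * β j| :=
        (abs_sum_le_sum_abs _ _).trans (sum_le_sum fun i _ => abs_sum_le_sum_abs _ _)
    _ ≤ ∑ i, ∑ j, |β i| * ε * |β j| := by
        gcongr with i _ j _
        rw [abs_mul, abs_mul]
        gcongr
        exact h i j
    _ = ε * (∑ i, |β i|) ^ 2 := by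
        simp only [← sum_mul, ← mul_sum]
        ring

theorem sq_sum_abs_le_of_sum_compl_le [DecidableEq ι] {I : Finset ι} {s : ℕ} {c : ℝ}
    {β : ι → ℝ} (hcard : I.card ≤ s) (hcone : ∑ i ∈ Iᶜ, |β i| ≤ c * ∑ i ∈ I, |β i|) :
    (∑ i, |β i|) ^ 2 ≤ (1 + c) ^ 2 * s * ∑ i ∈ I, β i ^ 2 := by
  have hsplit : ∑ i, |β i| ≤ (1 + c) * ∑ i ∈ I, |β i| := by
    rw [← sum_compl_add_sum I]
    linarith
  have hcs : (∑ i ∈ I, |β i|) ^ 2 ≤ s * ∑ i ∈ I, β i ^ 2 :=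
    calc (∑ i ∈ I, |β i|) ^ 2 ≤ I.card * ∑ i ∈ I, |β i| ^ 2 := sq_sum_le_card_mul_sum_sq
      _ ≤ s * ∑ i ∈ I, β i ^ 2 := by simp only [sq_abs]; gcongr
  calc (∑ i, |β i|) ^ 2 ≤ ((1 + c) * ∑ i ∈ I, |β i|) ^ 2 :=
        pow_le_pow_left₀ (sum_nonneg fun i _ => abs_nonneg _) hsplit 2
    _ = (1 + c) ^ 2 * (∑ i ∈ I, |β i|) ^ 2 := mul_pow _ _ _
    _ ≤ (1 + c) ^ 2 * s * ∑ i ∈ I, β i ^ 2 := by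
        rw [mul_assoc]
        exact mul_le_mul_of_nonneg_left hcs (sq_nonneg _)

end QuadraticForm

section RestrictedMinEigenvalue

variable {d : ℕ} {M : Matrix (Fin d) (Fin d) ℝ} {s : ℕ}

theorem le_restrictedMinEigenvalueSq {a : ℝ} (hs : 1 ≤ s) (hd : 0 < d)
    (h : ∀ (I : Finset (Fin d)) (β : Fin d → ℝ), I.card ≤ s → (∃ i ∈ I, β i ≠ 0) →
      ∑ i ∈ Iᶜ, |β i| ≤ 3 * ∑ i ∈ I, |β i| →
      a * ∑ i ∈ I, β i ^ 2 ≤ ∑ i, ∑ j, β i * M i j * β j) :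
    a ≤ restrictedMinEigenvalueSq M s := by
  refine le_csInf ?_ ?_
  · let i₀ : Fin d := ⟨0, hd⟩
    refine ⟨_, {i₀}, Pi.single i₀ 1, by simpa using hs, ⟨i₀, mem_singleton_self _, by simp⟩,
      ?_, rfl⟩
    have hcompl : ∑ i ∈ {i₀}ᶜ, |Pi.single i₀ (1 : ℝ) i| = 0 :=
      sum_eq_zero fun i hi => by simp [Pi.single_eq_of_ne (by simpa using hi : i ≠ i₀)]
    simp [hcompl]
  · rintro v ⟨I, β, hcard, ⟨i, hi, hβi⟩, hcone, rfl⟩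
    have hQ : 0 < ∑ i ∈ I, β i ^ 2 := sum_pos' (fun _ _ => sq_nonneg _) ⟨i, hi, by positivity⟩
    exact (le_div_iff₀ hQ).2 (h I β hcard ⟨i, hi, hβi⟩ hcone)

theorem Matrix.PosSemidef.restrictedMinEigenvalueSq_mul_le (hM : M.PosSemidef)
    {I : Finset (Fin d)} {β : Fin d → ℝ} (hcard : I.card ≤ s) (hI : ∃ i ∈ I, β i ≠ 0)
    (hcone : ∑ i ∈ Iᶜ, |β i| ≤ 3 * ∑ i ∈ I, |β i|) :
    restrictedMinEigenvalueSq M s * ∑ i ∈ I, β i ^ 2 ≤ ∑ i, ∑ j, β i * M i j * β j := by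
  obtain ⟨i, hi, hβi⟩ := hI
  have hQ : 0 < ∑ i ∈ I, β i ^ 2 := sum_pos' (fun _ _ => sq_nonneg _) ⟨i, hi, by positivity⟩
  refine (le_div_iff₀ hQ).1 (csInf_le ?_ ⟨I, β, hcard, ⟨i, hi, hβi⟩, hcone, rfl⟩)
  refine ⟨0, ?_⟩
  rintro v ⟨J, γ, -, -, -, rfl⟩
  exact div_nonneg (hM.sum_mul_mul_nonneg γ) (sum_nonneg fun _ _ => sq_nonneg _)

end RestrictedMinEigenvalue

theorem restrictedMinEigenvalueSq_stability_general {d : ℕ} (s : ℕ) (hs1 : 1 ≤ s) (hsd : s ≤ d)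
    (S0 S1 : Matrix (Fin d) (Fin d) ℝ)
    (h₀ : S0.PosSemidef)
    (hpos : 0 < restrictedMinEigenvalueSq S0 s)
    (hclose : ∀ i j, |S1 i j - S0 i j| ≤ restrictedMinEigenvalueSq S0 s / (32 * s)) :
    restrictedMinEigenvalueSq S1 s ≥ restrictedMinEigenvalueSq S0 s / 2 := by
  set σ := restrictedMinEigenvalueSq S0 s
  have hs : (0 : ℝ) < s := by exact_mod_cast hs1
  refine le_restrictedMinEigenvalueSq hs1 (hs1.trans hsd) fun I β hcard hI hcone => ?_
  have hS0 := h₀.restrictedMinEigenvalueSq_mul_le hcard hI hcone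
  have hpert := abs_le.1 (abs_sum_mul_mul_sub_le hclose β)
  have hl1 := sq_sum_abs_le_of_sum_compl_le hcard hcone
  calc σ / 2 * ∑ i ∈ I, β i ^ 2
      = σ * ∑ i ∈ I, β i ^ 2 - σ / (32 * s) * ((1 + 3) ^ 2 * s * ∑ i ∈ I, β i ^ 2) := by
        field_simp
        ring
    _ ≤ ∑ i, ∑ j, β i * S0 i j * β j - σ / (32 * s) * (∑ i, |β i|) ^ 2 :=
        sub_le_sub hS0 (mul_le_mul_of_nonneg_left hl1 (div_nonneg hpos.le (by positivity)))
    _ ≤ ∑ i, ∑ j, β i * S1 i j * β j := by linarith [hpert.1]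

/-- **Stability of the restricted minimum eigenvalue under entrywise perturbation.**
If `S0, S1` are positive semidefinite, `σ²_min(S0, s) > 0` and
`‖S1 − S0‖_∞ ≤ σ²_min(S0, s)/(32 s)` entrywise, then
`σ²_min(S1, s) ≥ σ²_min(S0, s)/2`. -/
theorem restrictedMinEigenvalueSq_stability {d : ℕ} (s : ℕ) (hs1 : 1 ≤ s) (hsd : s ≤ d)
    (S0 S1 : Matrix (Fin d) (Fin d) ℝ)
    (h₀ : S0.PosSemidef) (h₁ : S1.PosSemidef)
    (hpos : 0 < restrictedMinEigenvalueSq S0 s)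
    (hclose : ∀ i j, |S1 i j - S0 i j| ≤ restrictedMinEigenvalueSq S0 s / (32 * s)) :
    restrictedMinEigenvalueSq S1 s ≥ restrictedMinEigenvalueSq S0 s / 2 :=
  restrictedMinEigenvalueSq_stability_general s hs1 hsd S0 S1 h₀ hpos hclose
end
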